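/- Let (g, ·) be a pre-Lie algebra, (V; L, R) a bimodule, and φ a 2-cocycle with values in V. Let T: V → g be a φ-twisted 𝒪-operator, i.e. T(u)·T(v) = T(L_{T(u)}v + R_{T(v)}u) + T(φ(T(u), T(v))) for all u,v ∈ V. Then u ·^{T,φ} v := L_{T(u)}v + R_{T(v)}u + φ(T(u), T(v)) defines a pre-Lie algebra structure on V, and T is a pre-Lie homomorphism from (V, ·^{T,φ}) to (g, ·). -/

import Mathlib

/-- The pre-Lie identity for a multiplication on an additive group. -/
def IsPreLieMul {A : Type*} [AddCommGroup A] (f : A → A → A) : Prop :=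
  ∀ x y z : A, f (f x y) z - f x (f y z) = f (f y x) z - f y (f x z)

/-!
The graph `u ↦ (T u, u)` of `T` embeds `V` into the extension `g ⊕ V` built from the
cocycle `φ`, and the twisted 𝒪-operator identity says exactly that this embedding carries
`·^{T,φ}` to the product `∗` of the extension. Being injective, it pulls the pre-Lie identity
of `∗` back to `V`.
-/

theorem IsPreLieMul.of_injective {A B : Type*} [AddCommGroup A] [AddCommGroup B]
    {f : A → A → A} {g : B → B → B} (hf : IsPreLieMul f) (ι : B →+ A)
    (hι : Function.Injective ι) (hmul : ∀ x y, ι (g x y) = f (ι x) (ι y)) :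
    IsPreLieMul g := by
  intro x y z
  apply hι
  simp only [map_sub, hmul]
  exact hf _ _ _

theorem twisted_O_operator_induced_preLie_general
    {𝕜 G V : Type*} [Field 𝕜] [AddCommGroup G] [Module 𝕜 G]
    [AddCommGroup V] [Module 𝕜 V]
    (m : G →ₗ[𝕜] G →ₗ[𝕜] G)
    (L R : G →ₗ[𝕜] Module.End 𝕜 V)
    (φ : G →ₗ[𝕜] G →ₗ[𝕜] V)
    (hφ : IsPreLieMul (fun p q : G × V =>
        (m p.1 q.1, L p.1 q.2 + R q.1 p.2 + φ p.1 q.1)))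
    (T : V →ₗ[𝕜] G)
    (hT : ∀ u v : V,
      m (T u) (T v) = T (L (T u) v + R (T v) u) + T (φ (T u) (T v))) :
    IsPreLieMul (fun u v : V => L (T u) v + R (T v) u + φ (T u) (T v)) ∧
      ∀ u v : V,
        T (L (T u) v + R (T v) u + φ (T u) (T v)) = m (T u) (T v) := by
  have map_twistedMul : ∀ u v : V,
      T (L (T u) v + R (T v) u + φ (T u) (T v)) = m (T u) (T v) := fun u v => by
    rw [map_add, hT]
  let graph : V →+ G × V := T.toAddMonoidHom.prod (AddMonoidHom.id V)
  have graph_injective : Function.Injective graph := fun u v h => congrArg Prod.snd h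
  exact ⟨hφ.of_injective graph graph_injective fun u v => Prod.ext (map_twistedMul u v) rfl,
    map_twistedMul⟩

/-- Let `(g, ·)` be a pre-Lie algebra, `(V; L, R)` a bimodule,
`φ` a 2-cocycle (i.e. `g ⊕ V` with `(x,u)∗(y,v) = (x·y, L_x v + R_y u + φ(x,y))`
is pre-Lie), and `T : V → g` a `φ`-twisted 𝒪-operator:
`T(u)·T(v) = T(L_{T(u)}v + R_{T(v)}u) + T(φ(T(u),T(v)))`.  Then
`u ·^{T,φ} v := L_{T(u)}v + R_{T(v)}u + φ(T(u),T(v))` is a pre-Lie structure on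
`V`, and `T` is a pre-Lie homomorphism from `(V, ·^{T,φ})` to `(g, ·)`. -/
theorem twisted_O_operator_induced_preLie
    {𝕜 G V : Type*} [Field 𝕜] [CharZero 𝕜] [AddCommGroup G] [Module 𝕜 G]
    [AddCommGroup V] [Module 𝕜 V]
    (m : G →ₗ[𝕜] G →ₗ[𝕜] G)
    (hm : ∀ x y z : G, m (m x y) z - m x (m y z) = m (m y x) z - m y (m x z))
    (L R : G →ₗ[𝕜] Module.End 𝕜 V)
    (hbim1 : ∀ (x y : G) (u : V),
      L x (L y u) - L (m x y) u = L y (L x u) - L (m y x) u)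
    (hbim2 : ∀ (x y : G) (u : V),
      L x (R y u) - R y (L x u) = R (m x y) u - R y (R x u))
    (φ : G →ₗ[𝕜] G →ₗ[𝕜] V)
    (hφ : IsPreLieMul (fun p q : G × V =>
        (m p.1 q.1, L p.1 q.2 + R q.1 p.2 + φ p.1 q.1)))
    (T : V →ₗ[𝕜] G)
    (hT : ∀ u v : V,
      m (T u) (T v) = T (L (T u) v + R (T v) u) + T (φ (T u) (T v))) :
    IsPreLieMul (fun u v : V => L (T u) v + R (T v) u + φ (T u) (T v)) ∧
      ∀ u v : V,
        T (L (T u) v + R (T v) u + φ (T u) (T v)) = m (T u) (T v) :=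
  twisted_O_operator_induced_preLie_general m L R φ hφ T hT
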